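/- Assume (S1)–(S2). Fix integers t ≤ u with u − t + 1 ≥ h, potentials g_t,…,g_u satisfying (S2), and a point x* ∈ X. Define N : X → [0,∞) by N(x) = g_t(x) · ∫ [Π_{j=t+1}^{u} g_j(z_j)] · m(x, z_{t+1}) · [Π_{j=t+1}^{u−1} m(z_j, z_{j+1})] · m(z_u, x*) ν_0^{⊗(u−t)}(dz_{t+1}⋯dz_u). Then for every probability measure μ on X: sup_{x∈X} N(x) ≤ δ·(σ+/σ−)·∫ N(x) μ(dx). -/

import Mathlib

open MeasureTheory Finset

/-- Extension of `z : X^{h-1}` (interpreted as states at times `1, …, h-1`) by the boundary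
states `x1` at time `0` and `xh1` at times `≥ h`. -/
noncomputable def ext1 {X : Type*} (x1 xh1 : X) {N : ℕ} (z : Fin N → X) (t : ℕ) : X :=
  if ht : 1 ≤ t ∧ t ≤ N then z ⟨t - 1, by omega⟩ else if t = 0 then x1 else xh1

/-- The `h`-step minorisation of assumption (S1):
`∫ ∏_{j=1}^{h} m(x_j, x_{j+1}) ν₀(dx_2) ⋯ ν₀(dx_h) ≥ σ₋` for all `x_1, x_{h+1}`. -/
def S1minor {X : Type*} [MeasurableSpace X] (ν0 : Measure X) (mker : X → X → ℝ)
    (h : ℕ) (σm : ℝ) : Prop :=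
  ∀ x1 xh1 : X, σm ≤
    ∫ z : Fin (h - 1) → X,
      ∏ j ∈ Finset.range h, mker (ext1 x1 xh1 z j) (ext1 x1 xh1 z (j + 1))
      ∂(Measure.pi fun _ => ν0)

/-- Extension of `z : X^{u-s+1}` (interpreted as states at times `s, …, u`) by the boundary
states `xm` at times `< s` and `xp` at times `> u`. -/
noncomputable def extBlock {X : Type*} (s u : ℕ) (xm xp : X) (z : Fin (u - s + 1) → X)
    (t : ℕ) : X :=
  if ht : s ≤ t ∧ t ≤ u then z ⟨t - s, by omega⟩ else if t < s then xm else xp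

/-- `N(x) = g_t(x) · ∫ [Π_{j=t+1}^{u} g_j(z_j)] · m(x, z_{t+1}) · [Π_{j=t+1}^{u-1}
m(z_j, z_{j+1})] · m(z_u, x*) ν₀^{⊗(u-t)}(dz)`: the unnormalized conditional density of the
observations of the block `{t, …, u}` and of the fixed right boundary state `x*`, given the
state `x` at time `t`. -/
noncomputable def Nfun {X : Type*} [MeasurableSpace X] (ν0 : Measure X)
    (mker : X → X → ℝ) (g : ℕ → X → ℝ) (t u : ℕ) (xstar : X) (x : X) : ℝ :=
  g t x *
    ∫ z : Fin (u - (t + 1) + 1) → X,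
      (∏ j ∈ Finset.Icc (t + 1) (u + 1),
        mker (extBlock (t + 1) u x xstar z (j - 1)) (extBlock (t + 1) u x xstar z j)) *
        ∏ j ∈ Finset.Icc (t + 1) u, g j (extBlock (t + 1) u x xstar z j)
      ∂(Measure.pi fun _ => ν0)

/-!
Write `N(x) = g_t(x) K(x, x*)`, where `K` is the `(u - t)`-step transition density weighted by the
potentials at the intermediate states. Splitting off the first `h - 1` steps (when `u - t ≥ h`),
`K(x, x*) = ∫ K_{h-1}(x, e) ψ(e) ν₀(de)` with `ψ` independent of `x`. With `c_k = sup g_k` and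
`r = δ^{1/h}`, the upper bound `m ≤ σ₊` gives `K_{h-1}(x, e) ≤ (∏ c_k) σ₊`, while `g_k ≥ c_k / r`
and the `h`-step minorisation give `K_{h-1}(y, e) ≥ r^{-(h-1)} (∏ c_k) σ₋`. Hence
`N(x) ≤ r · r^{h-1} (σ₊/σ₋) N(y) = δ (σ₊/σ₋) N(y)` for all `x, y`; integrate in `y` against `μ`.
-/

lemma prod_range_succ_add {M : Type*} [CommMonoid M] (f : ℕ → M) (n j : ℕ) :
    ∏ i ∈ range (n + 1), f (j + i) = f j * ∏ i ∈ range n, f (j + 1 + i) := by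
  rw [prod_range_succ', mul_comm]
  simp only [add_zero, add_assoc, add_comm 1]

section Paths

variable {X : Type*}

lemma ext1_zero (a b : X) {N : ℕ} (z : Fin N → X) : ext1 a b z 0 = a := by
  simp [ext1]

lemma ext1_of_lt (a b : X) {N : ℕ} (z : Fin N → X) {j : ℕ} (hj : N < j) : ext1 a b z j = b := by
  simp [ext1, show ¬j ≤ N by omega, show j ≠ 0 by omega]

lemma ext1_cons_succ (a b x : X) {N : ℕ} (z : Fin N → X) (j : ℕ) :
    ext1 a b (Fin.cons x z : Fin (N + 1) → X) (j + 1) = ext1 x b z j := by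
  rcases j with _ | j
  · simp [ext1]
  · by_cases hj : j + 1 ≤ N
    · simp only [ext1, dif_pos (⟨by omega, by omega⟩ : 1 ≤ j + 1 + 1 ∧ j + 1 + 1 ≤ N + 1),
        dif_pos (⟨by omega, hj⟩ : 1 ≤ j + 1 ∧ j + 1 ≤ N)]
      exact Fin.cons_succ (α := fun _ => X) x z ⟨j, by omega⟩
    · rw [ext1_of_lt _ _ _ (by omega), ext1_of_lt _ _ _ (by omega)]

lemma extBlock_succ_add {t u : ℕ} (htu : t < u) (x b : X) (z : Fin (u - (t + 1) + 1) → X)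
    (i : ℕ) : extBlock (t + 1) u x b z (t + i) = ext1 x b z i := by
  unfold extBlock ext1
  split_ifs <;> first | rfl | omega | exact congrArg z (Fin.ext (by dsimp only; omega))

end Paths

section WeightedKernel

variable {X : Type*} [MeasurableSpace X]

lemma measurable_ext1 (a b : X) {N : ℕ} (j : ℕ) :
    Measurable fun z : Fin N → X => ext1 a b z j := by
  unfold ext1
  split_ifs
  exacts [measurable_pi_apply _, measurable_const, measurable_const]

lemma integrable_of_nonneg_of_le {α : Type*} [MeasurableSpace α] {μ : Measure α}
    [IsFiniteMeasure μ] {f : α → ℝ} {C : ℝ} (hf : Measurable f) (h0 : ∀ a, 0 ≤ f a)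
    (hC : ∀ a, f a ≤ C) : Integrable f μ :=
  .of_bound hf.aestronglyMeasurable C
    (ae_of_all _ fun a => (Real.norm_of_nonneg (h0 a)).trans_le (hC a))

theorem integral_pi_fin_succ {μ : Measure X} [SigmaFinite μ] {n : ℕ}
    {F : (Fin (n + 1) → X) → ℝ} (hF : Integrable F (Measure.pi fun _ => μ)) :
    ∫ z, F z ∂(Measure.pi fun _ => μ) =
      ∫ x, ∫ z, F (Fin.cons x z) ∂(Measure.pi fun _ => μ) ∂μ := by
  have e := (measurePreserving_piFinSuccAbove (fun _ : Fin (n + 1) => μ) 0).symm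
  have hcons : ∀ p : X × (Fin n → X),
      (MeasurableEquiv.piFinSuccAbove (fun _ => X) 0).symm p = Fin.cons p.1 p.2 := fun p => by
    simp [MeasurableEquiv.piFinSuccAbove_symm_apply, Fin.insertNthEquiv, Fin.insertNth_zero']
  have hFe := (e.integrable_comp_emb (MeasurableEquiv.measurableEmbedding _)).2 hF
  simp only [Function.comp_def, hcons] at hFe
  rw [← e.integral_comp', ← integral_prod _ hFe]
  simp only [hcons]

lemma ciSup_le_mul_integral_of_le_mul {μ : Measure X} [IsProbabilityMeasure μ] {f : X → ℝ}
    {C : ℝ} (hf : Integrable f μ) (hfC : ∀ x y, f x ≤ C * f y) :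
    ⨆ x, f x ≤ C * ∫ y, f y ∂μ := by
  have := nonempty_of_isProbabilityMeasure μ
  refine ciSup_le fun x => ?_
  simpa [integral_const_mul] using integral_mono (integrable_const (f x)) (hf.const_mul C) (hfC x)

structure IsBoundedKernel (m : X → X → ℝ) (σ : ℝ) : Prop where
  measurable : Measurable (Function.uncurry m)
  nonneg : ∀ x y, 0 ≤ m x y
  le : ∀ x y, m x y ≤ σ

structure IsBoundedTransitionDensity (ν0 : Measure X) (m : X → X → ℝ) (σ : ℝ) : Prop
    extends IsBoundedKernel m σ where
  integral_eq_one : ∀ x, ∫ y, m x y ∂ν0 = 1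

structure IsBoundedPotential (g : ℕ → X → ℝ) (c : ℕ → ℝ) : Prop where
  measurable : ∀ k, Measurable (g k)
  nonneg : ∀ k x, 0 ≤ g k x
  le : ∀ k x, g k x ≤ c k

lemma IsBoundedKernel.nonneg_bound {m : X → X → ℝ} {σ : ℝ} (hm : IsBoundedKernel m σ) (x : X) :
    0 ≤ σ :=
  (hm.nonneg x x).trans (hm.le x x)

lemma IsBoundedPotential.nonneg_bound {g : ℕ → X → ℝ} {c : ℕ → ℝ} (hg : IsBoundedPotential g c)
    (x : X) (k : ℕ) : 0 ≤ c k :=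
  (hg.nonneg k x).trans (hg.le k x)

lemma isBoundedPotential_one : IsBoundedPotential (1 : ℕ → X → ℝ) 1 :=
  ⟨fun _ => measurable_const, fun _ _ => zero_le_one, fun _ _ => le_rfl⟩

/-- `weightedKernel ν0 m g n j x e = ∫ m(x,z₁) g_{j+1}(z₁) m(z₁,z₂) ⋯ g_{j+n}(zₙ) m(zₙ,e) dz`. -/
noncomputable def weightedKernel (ν0 : Measure X) (m : X → X → ℝ) (g : ℕ → X → ℝ) :
    ℕ → ℕ → X → X → ℝ
  | 0, _, x, e => m x e
  | n + 1, j, x, e => ∫ z, m x z * (g (j + 1) z * weightedKernel ν0 m g n (j + 1) z e) ∂ν0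

variable {ν0 : Measure X} {m : X → X → ℝ} {σ : ℝ} {g : ℕ → X → ℝ} {c : ℕ → ℝ}

lemma weightedKernel_nonneg (hm : ∀ x y, 0 ≤ m x y) (hg : ∀ k x, 0 ≤ g k x) (n j : ℕ)
    (x e : X) : 0 ≤ weightedKernel ν0 m g n j x e := by
  induction n generalizing j x with
  | zero => exact hm x e
  | succ n ih => exact integral_nonneg fun z => mul_nonneg (hm _ _) (mul_nonneg (hg _ _) (ih _ _))

lemma measurable_weightedKernel [SFinite ν0] (hm : Measurable (Function.uncurry m))
    (hg : ∀ k, Measurable (g k)) (n j : ℕ) :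
    Measurable fun p : X × X => weightedKernel ν0 m g n j p.1 p.2 := by
  induction n generalizing j with
  | zero => exact hm
  | succ n ih =>
    have hf : Measurable fun q : (X × X) × X =>
        m q.1.1 q.2 * (g (j + 1) q.2 * weightedKernel ν0 m g n (j + 1) q.2 q.1.2) :=
      (hm.comp (measurable_fst.fst.prodMk measurable_snd)).mul
        (((hg _).comp measurable_snd).mul ((ih _).comp (measurable_snd.prodMk measurable_fst.snd)))
    exact hf.stronglyMeasurable.integral_prod_right'.measurable

lemma measurable_weightedKernel_left [SFinite ν0] (hm : Measurable (Function.uncurry m))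
    (hg : ∀ k, Measurable (g k)) (n j : ℕ) (e : X) :
    Measurable fun x => weightedKernel ν0 m g n j x e :=
  (measurable_weightedKernel hm hg n j).comp (measurable_id.prodMk measurable_const)

lemma measurable_weightedKernel_right [SFinite ν0] (hm : Measurable (Function.uncurry m))
    (hg : ∀ k, Measurable (g k)) (n j : ℕ) (x : X) :
    Measurable fun e => weightedKernel ν0 m g n j x e :=
  (measurable_weightedKernel hm hg n j).comp (measurable_const.prodMk measurable_id)

lemma weightedKernel_le (hm : IsBoundedTransitionDensity ν0 m σ) (hg : IsBoundedPotential g c)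
    (n j : ℕ) (x e : X) :
    weightedKernel ν0 m g n j x e ≤ (∏ i ∈ range n, c (j + 1 + i)) * σ := by
  induction n generalizing j x with
  | zero => simpa [weightedKernel] using hm.le x e
  | succ n ih =>
    have hm_int : Integrable (m x) ν0 :=
      .of_integral_ne_zero (by simp [hm.integral_eq_one x])
    calc weightedKernel ν0 m g (n + 1) j x e
        ≤ ∫ z, m x z * (c (j + 1) * ((∏ i ∈ range n, c (j + 1 + 1 + i)) * σ)) ∂ν0 := by
          refine integral_mono_of_nonneg (ae_of_all _ fun z => ?_) (hm_int.mul_const _)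
            (ae_of_all _ fun z => ?_)
          · exact mul_nonneg (hm.nonneg _ _)
              (mul_nonneg (hg.nonneg _ _) (weightedKernel_nonneg hm.nonneg hg.nonneg _ _ _ _))
          · exact mul_le_mul_of_nonneg_left (mul_le_mul (hg.le _ _) (ih _ _)
              (weightedKernel_nonneg hm.nonneg hg.nonneg _ _ _ _)
              (hg.nonneg_bound z _)) (hm.nonneg _ _)
      _ = (∏ i ∈ range (n + 1), c (j + 1 + i)) * σ := by
          rw [integral_mul_const, hm.integral_eq_one, one_mul, prod_range_succ_add, mul_assoc]

lemma measurable_potential_mul_weightedKernel [SFinite ν0]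
    (hm : Measurable (Function.uncurry m)) (hg : ∀ k, Measurable (g k)) (n k : ℕ) (e : X) :
    Measurable fun z => g k z * weightedKernel ν0 m g n k z e :=
  (hg k).mul (measurable_weightedKernel_left hm hg n k e)

lemma potential_mul_weightedKernel_le (hm : IsBoundedTransitionDensity ν0 m σ)
    (hg : IsBoundedPotential g c) (n k : ℕ) (z e : X) :
    g k z * weightedKernel ν0 m g n k z e ≤ c k * ((∏ i ∈ range n, c (k + 1 + i)) * σ) :=
  mul_le_mul (hg.le k z) (weightedKernel_le hm hg n k z e)
    (weightedKernel_nonneg hm.nonneg hg.nonneg n k z e) (hg.nonneg_bound z k)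

lemma integrable_weightedKernel_mul [IsFiniteMeasure ν0] (hm : IsBoundedTransitionDensity ν0 m σ)
    (hg : IsBoundedPotential g c) {φ : X → ℝ} {C : ℝ} (hφ : Measurable φ) (hφ0 : ∀ z, 0 ≤ φ z)
    (hφC : ∀ z, φ z ≤ C) (n j : ℕ) (x : X) :
    Integrable (fun z => weightedKernel ν0 m g n j x z * φ z) ν0 :=
  integrable_of_nonneg_of_le
    ((measurable_weightedKernel_right hm.measurable hg.measurable _ _ _).mul hφ)
    (fun z => mul_nonneg (weightedKernel_nonneg hm.nonneg hg.nonneg _ _ _ _) (hφ0 z))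
    (fun z => mul_le_mul (weightedKernel_le hm hg _ _ _ _) (hφC z) (hφ0 z)
      ((weightedKernel_nonneg hm.nonneg hg.nonneg _ _ _ _).trans (weightedKernel_le hm hg n j x z)))

lemma prod_mul_weightedKernel_one_le [IsFiniteMeasure ν0] (hm : IsBoundedTransitionDensity ν0 m σ)
    (hg : IsBoundedPotential g c) {b : ℕ → ℝ} (hb : ∀ k, 0 ≤ b k) (hbg : ∀ k x, b k ≤ g k x)
    (n j : ℕ) (x e : X) :
    (∏ i ∈ range n, b (j + 1 + i)) * weightedKernel ν0 m 1 n j x e ≤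
      weightedKernel ν0 m g n j x e := by
  induction n generalizing j x with
  | zero => simp [weightedKernel]
  | succ n ih =>
    have hψ : ∀ z, 0 ≤ g (j + 1) z * weightedKernel ν0 m g n (j + 1) z e := fun z =>
      mul_nonneg (hg.nonneg _ _) (weightedKernel_nonneg hm.nonneg hg.nonneg _ _ _ _)
    have hψ_int := integrable_weightedKernel_mul hm hg
      (measurable_potential_mul_weightedKernel hm.measurable hg.measurable _ _ _) hψ
      (potential_mul_weightedKernel_le hm hg n (j + 1) · e) 0 j x
    simp only [weightedKernel, Pi.one_apply, one_mul] at hψ_int ⊢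
    rw [prod_range_succ_add, mul_assoc, ← integral_const_mul, ← integral_const_mul]
    refine integral_mono_of_nonneg (ae_of_all _ fun z => ?_) hψ_int (ae_of_all _ fun z => ?_)
    · exact mul_nonneg (hb _) (mul_nonneg (prod_nonneg fun _ _ => hb _)
        (mul_nonneg (hm.nonneg _ _)
          (weightedKernel_nonneg hm.nonneg (fun _ _ => zero_le_one) _ _ _ _)))
    · calc b (j + 1) * ((∏ i ∈ range n, b (j + 1 + 1 + i)) *
            (m x z * weightedKernel ν0 m 1 n (j + 1) z e))
          = m x z * (b (j + 1) * ((∏ i ∈ range n, b (j + 1 + 1 + i)) *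
            weightedKernel ν0 m 1 n (j + 1) z e)) := by ring
        _ ≤ m x z * (g (j + 1) z * weightedKernel ν0 m g n (j + 1) z e) :=
          mul_le_mul_of_nonneg_left (mul_le_mul (hbg _ _) (ih _ _)
            (mul_nonneg (prod_nonneg fun _ _ => hb _)
              (weightedKernel_nonneg hm.nonneg (fun _ _ => zero_le_one) _ _ _ _))
            (hg.nonneg _ _)) (hm.nonneg _ _)

lemma weightedKernel_add [IsFiniteMeasure ν0] (hm : IsBoundedTransitionDensity ν0 m σ)
    (hg : IsBoundedPotential g c) (a b j : ℕ) (x y : X) :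
    weightedKernel ν0 m g (a + b + 1) j x y = ∫ e, weightedKernel ν0 m g a j x e *
      (g (j + a + 1) e * weightedKernel ν0 m g b (j + a + 1) e y) ∂ν0 := by
  induction a generalizing j x with
  | zero => rw [zero_add]; rfl
  | succ a ih =>
    have hK0 := weightedKernel_nonneg (ν0 := ν0) hm.nonneg hg.nonneg
    have hK := weightedKernel_le hm hg
    set ψ : X → ℝ := fun e => g (j + 1 + a + 1) e * weightedKernel ν0 m g b (j + 1 + a + 1) e y
    have hψ0 : ∀ e, 0 ≤ ψ e := fun e => mul_nonneg (hg.nonneg _ _) (hK0 _ _ _ _)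
    have hint : Integrable (Function.uncurry fun z e =>
        m x z * (g (j + 1) z * (weightedKernel ν0 m g a (j + 1) z e * ψ e))) (ν0.prod ν0) := by
      have hψ_le := (potential_mul_weightedKernel_le hm hg b (j + 1 + a + 1) · y)
      have hAψ0 : ∀ z e, 0 ≤ weightedKernel ν0 m g a (j + 1) z e * ψ e := fun z e =>
        mul_nonneg (hK0 _ _ _ _) (hψ0 e)
      refine integrable_of_nonneg_of_le ?_
        (fun p => mul_nonneg (hm.nonneg _ _) (mul_nonneg (hg.nonneg _ _) (hAψ0 _ _)))
        (fun p => mul_le_mul (hm.le _ _) (mul_le_mul (hg.le _ _) (mul_le_mul (hK _ _ _ _)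
          (hψ_le _) (hψ0 _) ((hK0 _ _ _ _).trans (hK a (j + 1) p.1 p.2))) (hAψ0 _ _)
          (hg.nonneg_bound p.1 _)) (mul_nonneg (hg.nonneg _ _) (hAψ0 _ _)) (hm.nonneg_bound x))
      exact (hm.measurable.of_uncurry_left.comp measurable_fst).mul
        (((hg.measurable _).comp measurable_fst).mul
          ((measurable_weightedKernel hm.measurable hg.measurable _ _).mul
            ((measurable_potential_mul_weightedKernel hm.measurable hg.measurable _ _ _).comp
              measurable_snd)))
    calc weightedKernel ν0 m g (a + 1 + b + 1) j x y
        = ∫ z, m x z * (g (j + 1) z * weightedKernel ν0 m g (a + b + 1) (j + 1) z y) ∂ν0 := by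
          rw [show a + 1 + b + 1 = a + b + 1 + 1 by omega]; rfl
      _ = ∫ z, ∫ e, m x z * (g (j + 1) z * (weightedKernel ν0 m g a (j + 1) z e * ψ e)) ∂ν0
            ∂ν0 := by
          simp_rw [ih, integral_const_mul]
          rfl
      _ = ∫ e, ∫ z, m x z * (g (j + 1) z * (weightedKernel ν0 m g a (j + 1) z e * ψ e)) ∂ν0 ∂ν0 :=
          integral_integral_swap hint
      _ = ∫ e, weightedKernel ν0 m g (a + 1) j x e *
            (g (j + (a + 1) + 1) e * weightedKernel ν0 m g b (j + (a + 1) + 1) e y) ∂ν0 := by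
          simp_rw [show j + (a + 1) + 1 = j + 1 + a + 1 by omega, weightedKernel,
            ← integral_mul_const, mul_assoc]
          rfl

lemma weightedKernel_le_mul_of_forall_le [IsFiniteMeasure ν0]
    (hm : IsBoundedTransitionDensity ν0 m σ) (hg : IsBoundedPotential g c) {a j : ℕ} {x x' : X}
    {C : ℝ} (hK : ∀ e, weightedKernel ν0 m g a j x e ≤ C * weightedKernel ν0 m g a j x' e)
    (b : ℕ) (y : X) :
    weightedKernel ν0 m g (a + b + 1) j x y ≤ C * weightedKernel ν0 m g (a + b + 1) j x' y := by
  have hψ0 : ∀ e, 0 ≤ g (j + a + 1) e * weightedKernel ν0 m g b (j + a + 1) e y := fun e =>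
    mul_nonneg (hg.nonneg _ _) (weightedKernel_nonneg hm.nonneg hg.nonneg _ _ _ _)
  rw [weightedKernel_add hm hg, weightedKernel_add hm hg, ← integral_const_mul]
  refine integral_mono_of_nonneg
    (ae_of_all _ fun e => mul_nonneg (weightedKernel_nonneg hm.nonneg hg.nonneg _ _ _ _) (hψ0 e))
    ((integrable_weightedKernel_mul hm hg
      (measurable_potential_mul_weightedKernel hm.measurable hg.measurable _ _ _) hψ0
      (potential_mul_weightedKernel_le hm hg b _ · y) a j x').const_mul C)
    (ae_of_all _ fun e => ?_)
  simpa only [← mul_assoc] using mul_le_mul_of_nonneg_right (hK e) (hψ0 e)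

lemma weightedKernel_le_pow_mul_weightedKernel [IsFiniteMeasure ν0]
    (hm : IsBoundedTransitionDensity ν0 m σ) (hg : IsBoundedPotential g c) {r σm : ℝ}
    (hr : 0 < r) (hσm : 0 < σm) (hcr : ∀ k z, c k ≤ r * g k z) {n j : ℕ}
    (hmin : ∀ x e, σm ≤ weightedKernel ν0 m 1 n j x e) (x y e : X) :
    weightedKernel ν0 m g n j x e ≤ r ^ n * (σ / σm) * weightedKernel ν0 m g n j y e := by
  have hC : 0 ≤ r ^ n * (σ / σm) := by
    have := hm.nonneg_bound x
    positivity
  have hb : ∀ k, 0 ≤ r⁻¹ * c k := fun k => mul_nonneg (inv_nonneg.2 hr.le) (hg.nonneg_bound x k)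
  calc weightedKernel ν0 m g n j x e
      ≤ (∏ i ∈ range n, c (j + 1 + i)) * σ := weightedKernel_le hm hg n j x e
    _ = r ^ n * (σ / σm) * ((∏ i ∈ range n, r⁻¹ * c (j + 1 + i)) * σm) := by
      rw [prod_mul_distrib, prod_const, card_range, inv_pow]
      field_simp
    _ ≤ r ^ n * (σ / σm) *
        ((∏ i ∈ range n, r⁻¹ * c (j + 1 + i)) * weightedKernel ν0 m 1 n j y e) :=
      mul_le_mul_of_nonneg_left
        (mul_le_mul_of_nonneg_left (hmin y e) (prod_nonneg fun _ _ => hb _)) hC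
    _ ≤ r ^ n * (σ / σm) * weightedKernel ν0 m g n j y e :=
      mul_le_mul_of_nonneg_left (prod_mul_weightedKernel_one_le hm hg hb
        (fun k z => (inv_mul_le_iff₀ hr).2 (hcr k z)) n j y e) hC

lemma weightedKernel_le_pow_mul_weightedKernel_of_le [IsFiniteMeasure ν0]
    (hm : IsBoundedTransitionDensity ν0 m σ) (hg : IsBoundedPotential g c) {r σm : ℝ}
    (hr : 0 < r) (hσm : 0 < σm) (hcr : ∀ k z, c k ≤ r * g k z) {d n : ℕ}
    (hmin : ∀ j x e, σm ≤ weightedKernel ν0 m 1 d j x e) (hdn : d ≤ n) (j : ℕ) (x y e : X) :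
    weightedKernel ν0 m g n j x e ≤ r ^ d * (σ / σm) * weightedKernel ν0 m g n j y e := by
  obtain rfl | hlt := hdn.eq_or_lt
  · exact weightedKernel_le_pow_mul_weightedKernel hm hg hr hσm hcr (hmin j) x y e
  · obtain ⟨b, rfl⟩ : ∃ b, n = d + b + 1 := ⟨n - d - 1, by omega⟩
    exact weightedKernel_le_mul_of_forall_le hm hg
      (weightedKernel_le_pow_mul_weightedKernel hm hg hr hσm hcr (hmin j) x y) b e

lemma integral_ext1_path_eq_weightedKernel [IsProbabilityMeasure ν0] (hm : IsBoundedKernel m σ)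
    (hg : IsBoundedPotential g c) (n j : ℕ) (a b : X) :
    ∫ z : Fin n → X, (∏ i ∈ range (n + 1), m (ext1 a b z i) (ext1 a b z (i + 1))) *
        ∏ i ∈ range n, g (j + 1 + i) (ext1 a b z (i + 1)) ∂(Measure.pi fun _ => ν0) =
      weightedKernel ν0 m g n j a b := by
  induction n generalizing j a with
  | zero => simp [weightedKernel, ext1_zero, ext1_of_lt]
  | succ n ih =>
    have hF : Integrable (fun z : Fin (n + 1) → X =>
        (∏ i ∈ range (n + 1 + 1), m (ext1 a b z i) (ext1 a b z (i + 1))) *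
          ∏ i ∈ range (n + 1), g (j + 1 + i) (ext1 a b z (i + 1))) (Measure.pi fun _ => ν0) := by
      refine integrable_of_nonneg_of_le ?_
        (fun z => mul_nonneg (prod_nonneg fun _ _ => hm.nonneg _ _)
          (prod_nonneg fun _ _ => hg.nonneg _ _))
        (fun z => mul_le_mul (prod_le_prod (fun _ _ => hm.nonneg _ _) fun _ _ => hm.le _ _)
          (prod_le_prod (fun _ _ => hg.nonneg _ _) fun _ _ => hg.le _ _)
          (prod_nonneg fun _ _ => hg.nonneg _ _) (prod_nonneg fun _ _ => hm.nonneg_bound a))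
      exact (measurable_prod _ fun i _ => hm.measurable.comp
        ((measurable_ext1 a b i).prodMk (measurable_ext1 a b (i + 1)))).mul
        (measurable_prod _ fun i _ => (hg.measurable _).comp (measurable_ext1 a b (i + 1)))
    rw [integral_pi_fin_succ hF]
    refine integral_congr_ae (ae_of_all _ fun x => ?_)
    dsimp only
    rw [← ih (j + 1) x, ← integral_const_mul, ← integral_const_mul]
    refine integral_congr_ae (ae_of_all _ fun z => ?_)
    dsimp only
    rw [prod_range_succ' _ (n + 1)]
    simp only [ext1_cons_succ, ext1_zero]
    rw [prod_range_succ' (fun i => g (j + 1 + i) (ext1 x b z i)) n, ext1_zero]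
    ring_nf

lemma S1minor.le_weightedKernel_one [IsProbabilityMeasure ν0] {h : ℕ} {σm : ℝ}
    (hS : S1minor ν0 m h σm) (hh : 1 ≤ h) (hm : IsBoundedKernel m σ) (j : ℕ)
    (x e : X) : σm ≤ weightedKernel ν0 m 1 (h - 1) j x e := by
  have := integral_ext1_path_eq_weightedKernel (ν0 := ν0) hm isBoundedPotential_one (h - 1) j x e
  simp only [Nat.sub_add_cancel hh, Pi.one_apply, prod_const_one, mul_one] at this
  exact this ▸ hS x e

lemma Nfun_eq_mul_weightedKernel [IsProbabilityMeasure ν0] (hm : IsBoundedKernel m σ)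
    (hg : IsBoundedPotential g c) {t u : ℕ}
    (htu : t ≤ u) (xstar x : X) :
    Nfun ν0 m g t u xstar x = g t x * weightedKernel ν0 m g (u - t) t x xstar := by
  unfold Nfun
  congr 1
  rcases htu.eq_or_lt with rfl | htu
  · simp [extBlock, weightedKernel]
  · rw [show u - t = u - (t + 1) + 1 by omega,
      ← integral_ext1_path_eq_weightedKernel hm hg]
    refine integral_congr_ae (ae_of_all _ fun z => ?_)
    simp only [← Ico_add_one_right_eq_Icc, prod_Ico_eq_prod_range,
      show u + 1 + 1 - (t + 1) = u - (t + 1) + 1 + 1 by omega,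
      show u + 1 - (t + 1) = u - (t + 1) + 1 by omega]
    congr 1 <;> refine prod_congr rfl fun i _ => ?_
    · rw [show t + 1 + i - 1 = t + i by omega, add_assoc, add_comm 1 i,
        extBlock_succ_add htu, extBlock_succ_add htu]
    · rw [← extBlock_succ_add htu, add_assoc, add_comm 1 i]

end WeightedKernel

theorem stmt17_general {X : Type*} [MeasurableSpace X]
    (ν0 : Measure X) [IsProbabilityMeasure ν0]
    (mker : X → X → ℝ) (g : ℕ → X → ℝ)
    (h : ℕ) (hh : 1 ≤ h) (σm σp δ : ℝ)
    (hσm : 0 < σm) (hδ : 1 ≤ δ)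
    -- (S1)
    (hm_meas : Measurable (Function.uncurry mker))
    (hm_nonneg : ∀ x x', 0 ≤ mker x x')
    (hm_le : ∀ x x', mker x x' ≤ σp)
    (hm_int : ∀ x, ∫ x', mker x x' ∂ν0 = 1)
    (hS1 : S1minor ν0 mker h σm)
    -- (S2)
    (hg_meas : ∀ t, Measurable (g t))
    (hg_pos : ∀ t x, 0 < g t x)
    (hg_bdd : ∀ t, ∃ C, ∀ x, g t x ≤ C)
    (hg_ratio : ∀ t (x y : X), g t x ≤ δ ^ ((h : ℝ))⁻¹ * g t y)
    -- the block
    (t u : ℕ) (htu : t ≤ u) (hblock : h ≤ u - t + 1) (xstar : X) :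
    ∀ μ : Measure X, IsProbabilityMeasure μ →
      (⨆ x : X, Nfun ν0 mker g t u xstar x) ≤
        δ * (σp / σm) * ∫ x, Nfun ν0 mker g t u xstar x ∂μ := by
  intro μ _
  have := nonempty_of_isProbabilityMeasure ν0
  have hm : IsBoundedTransitionDensity ν0 mker σp := ⟨⟨hm_meas, hm_nonneg, hm_le⟩, hm_int⟩
  have hg : IsBoundedPotential g fun k => ⨆ x, g k x :=
    ⟨hg_meas, fun k x => (hg_pos k x).le, fun k x => le_ciSup (by
      obtain ⟨C, hC⟩ := hg_bdd k
      exact ⟨C, Set.forall_mem_range.2 hC⟩) x⟩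
  set r := δ ^ ((h : ℝ))⁻¹
  have hr : 0 < r := by positivity
  have hrh : r * r ^ (h - 1) = δ := by
    rw [← pow_succ', Nat.sub_add_cancel hh, ← Real.rpow_natCast, ← Real.rpow_mul (by positivity),
      inv_mul_cancel₀ (by positivity), Real.rpow_one]
  have hN := Nfun_eq_mul_weightedKernel (ν0 := ν0) hm.toIsBoundedKernel hg htu xstar
  refine ciSup_le_mul_integral_of_le_mul ?_ fun x y => ?_
  · rw [funext hN]
    exact integrable_of_nonneg_of_le
      (measurable_potential_mul_weightedKernel hm_meas hg_meas _ _ _)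
      (fun x => mul_nonneg (hg.nonneg _ _) (weightedKernel_nonneg hm_nonneg hg.nonneg _ _ _ _))
      (potential_mul_weightedKernel_le hm hg _ _ · xstar)
  · have hK := weightedKernel_le_pow_mul_weightedKernel_of_le hm hg hr hσm
      (fun k z => ciSup_le fun y => hg_ratio k y z)
      (hS1.le_weightedKernel_one hh hm.toIsBoundedKernel)
      (by omega : h - 1 ≤ u - t) t x y xstar
    calc Nfun ν0 mker g t u xstar x
        ≤ (r * g t y) * (r ^ (h - 1) * (σp / σm) * weightedKernel ν0 mker g (u - t) t y xstar) :=
          hN x ▸ mul_le_mul (hg_ratio t x y) hK (weightedKernel_nonneg hm_nonneg hg.nonneg _ _ _ _)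
            (mul_nonneg hr.le (hg.nonneg t y))
      _ = δ * (σp / σm) * Nfun ν0 mker g t u xstar y := by
          rw [hN y, ← hrh]
          ring

theorem stmt17 {X : Type*} [MeasurableSpace X] [StandardBorelSpace X]
    (ν0 : Measure X) [IsProbabilityMeasure ν0]
    (mker : X → X → ℝ) (g : ℕ → X → ℝ)
    (h : ℕ) (hh : 1 ≤ h) (σm σp δ : ℝ)
    (hσm : 0 < σm) (hσp : 0 < σp) (hδ : 1 ≤ δ)
    -- (S1)
    (hm_meas : Measurable (Function.uncurry mker))
    (hm_nonneg : ∀ x x', 0 ≤ mker x x')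
    (hm_le : ∀ x x', mker x x' ≤ σp)
    (hm_int : ∀ x, ∫ x', mker x x' ∂ν0 = 1)
    (hS1 : S1minor ν0 mker h σm)
    -- (S2)
    (hg_meas : ∀ t, Measurable (g t))
    (hg_pos : ∀ t x, 0 < g t x)
    (hg_bdd : ∀ t, ∃ C, ∀ x, g t x ≤ C)
    (hg_ratio : ∀ t (x y : X), g t x ≤ δ ^ ((h : ℝ))⁻¹ * g t y)
    -- the block
    (t u : ℕ) (htu : t ≤ u) (hblock : h ≤ u - t + 1) (xstar : X) :
    ∀ μ : Measure X, IsProbabilityMeasure μ →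
      (⨆ x : X, Nfun ν0 mker g t u xstar x) ≤
        δ * (σp / σm) * ∫ x, Nfun ν0 mker g t u xstar x ∂μ :=
  stmt17_general ν0 mker g h hh σm σp δ hσm hδ hm_meas hm_nonneg hm_le hm_int hS1 hg_meas hg_pos
    hg_bdd hg_ratio t u htu hblock xstar
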